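/- arXiv:1805.04466 — 3 statements merged into one kernel-verified Lean document; each statement's English description precedes it below -/
import Mathlib

section
/- Let N ≥ 1 be an integer, α > 0, ρ > 0, and let w₀ : ℝ^N → [0,∞) be measurable. Assume that on the set {|x| > ρ} one can write w₀ = ψ₁ + ψ₂ with ψ₁ ∈ L¹(ℝ^N), ψ₂ ∈ L^∞(ℝ^N), and that limsup_{t ↓ 0} (αt)^{1/α} ∫_{ℝ^N} G(t,0,y) w₀(y) dy > 1. Let u₀ : ℝ^N → [0,∞) be measurable with u₀(x) ≥ w₀(x) for almost every x with |x| < ρ. Then limsup_{t ↓ 0} (αt)^{1/α} · ess sup_{x ∈ ℝ^N} ∫_{ℝ^N} G(t,x,y) u₀(y) dy > 1. -/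
open MeasureTheory Real Set Filter ENNReal

/-- The Gaussian heat kernel `G(t,x,y) = (4πt)^{-N/2} exp(-|x-y|²/(4t))` on `ℝ^N`. -/
noncomputable def heatKernel (N : ℕ) (t : ℝ) (x y : EuclideanSpace ℝ (Fin N)) : ℝ :=
  (4 * π * t) ^ (-(N : ℝ) / 2) * Real.exp (-‖x - y‖ ^ 2 / (4 * t))

/-!
Split `∫ G(t,0,y) w₀(y) dy` at `|y| = ρ`. On `|y| > ρ`, where `w₀ ≤ |ψ₁| + ‖ψ₂‖_∞`, the kernel is
at most `(4πt)^{-N/2} e^{-ρ²/(8t)} e^{-|y|²/8}` for `t ≤ 1`; the factor `e^{-ρ²/(8t)}` beats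
every power of `t`, so this part contributes nothing to the limsup. On `|y| < ρ` we have
`w₀ ≤ u₀`, so the remaining part is at most `(e^{tΔ}u₀)(0)`; by Fatou, `x ↦ (e^{tΔ}u₀)(x)` is
lower semicontinuous, hence bounded at `0` by its essential supremum.
-/

open Topology

section Semicontinuity

variable {X α : Type*} [TopologicalSpace X]

theorem lowerSemicontinuous_lintegral [FirstCountableTopology X] [MeasurableSpace α]
    {μ : Measure α} {F : X → α → ℝ≥0∞} (hF : ∀ y, LowerSemicontinuous (F · y))
    (hFm : ∀ x, AEMeasurable (F x) μ) :
    LowerSemicontinuous fun x => ∫⁻ y, F x y ∂μ := by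
  refine lowerSemicontinuous_iff_le_liminf.2 fun x => ?_
  calc ∫⁻ y, F x y ∂μ ≤ ∫⁻ y, liminf (F · y) (𝓝 x) ∂μ :=
        lintegral_mono fun y => (hF y).le_liminf x
    _ ≤ liminf (fun x' => ∫⁻ y, F x' y ∂μ) (𝓝 x) := lintegral_liminf_le' hFm

theorem LowerSemicontinuous.le_essSup [MeasurableSpace X] {μ : Measure X} [μ.IsOpenPosMeasure]
    {f : X → ℝ≥0∞} (hf : LowerSemicontinuous f) (x : X) : f x ≤ essSup f μ := by
  by_contra! hx
  have hpos : 0 < μ (f ⁻¹' Ioi (essSup f μ)) := (hf.isOpen_preimage _).measure_pos μ ⟨x, hx⟩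
  have hnull : μ {y | essSup f μ < f y} = 0 := by simpa [ae_iff] using ae_le_essSup f
  exact hpos.ne' hnull

end Semicontinuity

theorem tendsto_mul_rpow_mul_exp_neg_div_nhdsGT_zero {a c : ℝ} (ha : 0 < a) (hc : 0 < c)
    (s : ℝ) : Tendsto (fun t => (a * t) ^ s * exp (-c / t)) (𝓝[>] 0) (𝓝 0) := by
  have hinv : Tendsto (fun t : ℝ => a⁻¹ * t⁻¹) (𝓝[>] 0) atTop :=
    tendsto_inv_nhdsGT_zero.const_mul_atTop (inv_pos.2 ha)
  refine ((tendsto_rpow_mul_exp_neg_mul_atTop_nhds_zero (-s) (c * a) (by positivity)).comp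
    hinv).congr' ?_
  filter_upwards [self_mem_nhdsWithin] with t (ht : 0 < t)
  have hat : 0 < a * t := by positivity
  rw [Function.comp_apply, ← mul_inv, Real.inv_rpow hat.le, Real.rpow_neg hat.le, inv_inv]
  congr 2
  field_simp

theorem integrable_exp_neg_mul_sq_norm {V : Type*} [NormedAddCommGroup V]
    [InnerProductSpace ℝ V] [FiniteDimensional ℝ V] [MeasurableSpace V] [BorelSpace V]
    {b : ℝ} (hb : 0 < b) : Integrable fun v : V => exp (-b * ‖v‖ ^ 2) := by
  refine (GaussianFourier.integrable_cexp_neg_mul_sq_norm_add (b := b) (by simpa using hb) 0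
    (0 : V)).norm.congr (.of_forall fun v => ?_)
  simp [Complex.norm_exp, ← Complex.ofReal_pow]

section HeatKernel

variable {N : ℕ}

theorem heatKernel_nonneg {t : ℝ} (ht : 0 ≤ t) (x y : EuclideanSpace ℝ (Fin N)) :
    0 ≤ heatKernel N t x y := by
  unfold heatKernel
  positivity

theorem lintegral_heatKernel_mul_le_essSup (t : ℝ) {u : EuclideanSpace ℝ (Fin N) → ℝ}
    (hu : Measurable u) (x : EuclideanSpace ℝ (Fin N)) :
    ∫⁻ y, ENNReal.ofReal (heatKernel N t x y * u y) ≤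
      essSup (fun x => ∫⁻ y, ENNReal.ofReal (heatKernel N t x y * u y)) volume := by
  refine LowerSemicontinuous.le_essSup (lowerSemicontinuous_lintegral (fun y => ?_) fun x => ?_) x
  · refine (ENNReal.continuous_ofReal.comp ?_).lowerSemicontinuous
    unfold heatKernel
    fun_prop
  · unfold heatKernel
    fun_prop

theorem heatKernel_zero_le {t ρ : ℝ} (ht₀ : 0 < t) (ht₁ : t ≤ 1) (hρ : 0 ≤ ρ)
    {y : EuclideanSpace ℝ (Fin N)} (hy : ρ ≤ ‖y‖) :
    heatKernel N t 0 y ≤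
      (4 * π * t) ^ (-(N : ℝ) / 2) * exp (-ρ ^ 2 / (8 * t)) * exp (-8⁻¹ * ‖y‖ ^ 2) := by
  have hρy : ρ ^ 2 ≤ ‖y‖ ^ 2 := pow_le_pow_left₀ hρ hy 2
  have hexponent : -‖y‖ ^ 2 / (4 * t) =
      -ρ ^ 2 / (8 * t) + -8⁻¹ * ‖y‖ ^ 2 - (2 * ‖y‖ ^ 2 - ρ ^ 2 - t * ‖y‖ ^ 2) / (8 * t) := by
    field_simp
    ring
  have hgap : 0 ≤ (2 * ‖y‖ ^ 2 - ρ ^ 2 - t * ‖y‖ ^ 2) / (8 * t) := by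
    refine div_nonneg ?_ (by positivity)
    nlinarith [sq_nonneg ‖y‖]
  rw [heatKernel, zero_sub, norm_neg, mul_assoc _ (exp _), ← exp_add]
  gcongr
  linarith

theorem setLIntegral_heatKernel_mul_le {t ρ M : ℝ} (ht₀ : 0 < t) (ht₁ : t ≤ 1) (hρ : 0 ≤ ρ)
    (hM : 0 ≤ M) {w ψ : EuclideanSpace ℝ (Fin N) → ℝ}
    (hw : ∀ᵐ y ∂volume, ρ < ‖y‖ → w y ≤ |ψ y| + M) :
    ∫⁻ y in {y | ρ < ‖y‖}, ENNReal.ofReal (heatKernel N t 0 y * w y) ≤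
      ENNReal.ofReal ((4 * π * t) ^ (-(N : ℝ) / 2) * exp (-ρ ^ 2 / (8 * t))) *
        ∫⁻ y, ENNReal.ofReal (|ψ y| + M * exp (-8⁻¹ * ‖y‖ ^ 2)) := by
  set D := (4 * π * t) ^ (-(N : ℝ) / 2) * exp (-ρ ^ 2 / (8 * t))
  have hD : 0 ≤ D := by positivity
  rw [← lintegral_const_mul' _ _ ofReal_ne_top]
  refine (lintegral_mono_ae ?_).trans (setLIntegral_le_lintegral _ _)
  rw [ae_restrict_iff' (measurableSet_lt measurable_const measurable_norm)]
  filter_upwards [hw] with y hwy (hy : ρ < ‖y‖)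
  rw [← ofReal_mul hD]
  refine ofReal_le_ofReal ?_
  have hexp : exp (-8⁻¹ * ‖y‖ ^ 2) ≤ 1 := exp_le_one_iff.2 (by nlinarith [sq_nonneg ‖y‖])
  calc heatKernel N t 0 y * w y ≤ heatKernel N t 0 y * (|ψ y| + M) :=
        mul_le_mul_of_nonneg_left (hwy hy) (heatKernel_nonneg ht₀.le 0 y)
    _ ≤ D * exp (-8⁻¹ * ‖y‖ ^ 2) * (|ψ y| + M) :=
        mul_le_mul_of_nonneg_right (heatKernel_zero_le ht₀ ht₁ hρ hy.le) (by positivity)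
    _ ≤ D * (|ψ y| + M * exp (-8⁻¹ * ‖y‖ ^ 2)) := by
        nlinarith [mul_le_mul_of_nonneg_left hexp (mul_nonneg hD (abs_nonneg (ψ y)))]

theorem tendsto_rpow_mul_setLIntegral_heatKernel_mul {α ρ : ℝ} (hα : 0 < α) (hρ : 0 < ρ)
    {w ψ₁ ψ₂ : EuclideanSpace ℝ (Fin N) → ℝ} (hψ₁ : Integrable ψ₁) (hψ₂ : MemLp ψ₂ ⊤)
    (hw : ∀ y, ρ < ‖y‖ → w y = ψ₁ y + ψ₂ y) :
    Tendsto (fun t => ENNReal.ofReal ((α * t) ^ (1 / α)) *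
      ∫⁻ y in {y | ρ < ‖y‖}, ENNReal.ofReal (heatKernel N t 0 y * w y)) (𝓝[>] 0) (𝓝 0) := by
  set M := lpNorm ψ₂ ⊤ volume
  set D : ℝ → ℝ := fun t => (4 * π * t) ^ (-(N : ℝ) / 2) * exp (-ρ ^ 2 / (8 * t))
  have hg : Integrable fun y => |ψ₁ y| + M * exp (-8⁻¹ * ‖y‖ ^ 2) :=
    hψ₁.abs.add ((integrable_exp_neg_mul_sq_norm (by norm_num)).const_mul M)
  have hpow : Tendsto (fun t => (α * t) ^ (1 / α)) (𝓝[>] 0) (𝓝 0) := by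
    have h := ((continuous_const_mul α).rpow_const (p := 1 / α)
      fun _ => Or.inr (by positivity)).tendsto 0
    rw [mul_zero, Real.zero_rpow (by positivity)] at h
    exact h.mono_left nhdsWithin_le_nhds
  have hD : Tendsto (fun t => (α * t) ^ (1 / α) * D t) (𝓝[>] 0) (𝓝 0) := by
    have hdecay := tendsto_mul_rpow_mul_exp_neg_div_nhdsGT_zero (by positivity : 0 < 4 * π)
      (by positivity : 0 < ρ ^ 2 / 8) (-(N : ℝ) / 2)
    simpa only [D, zero_mul, neg_div, div_div, mul_comm (8 : ℝ)] using hpow.mul hdecay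
  have hw' : ∀ᵐ y ∂volume, ρ < ‖y‖ → w y ≤ |ψ₁ y| + M := by
    filter_upwards [ae_le_lpNorm_exponent_top hψ₂] with y hψ₂y hy
    rw [hw y hy]
    exact add_le_add (le_abs_self _) ((le_abs_self _).trans hψ₂y)
  have hbound := ENNReal.Tendsto.mul_const (ENNReal.tendsto_ofReal hD)
    (Or.inr hg.lintegral_lt_top.ne)
  rw [ofReal_zero, zero_mul] at hbound
  refine tendsto_of_tendsto_of_tendsto_of_le_of_le' tendsto_const_nhds hbound
    (.of_forall fun _ => zero_le) ?_
  filter_upwards [Ioc_mem_nhdsGT zero_lt_one] with t ⟨ht₀, ht₁⟩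
  rw [ENNReal.ofReal_mul (by positivity), mul_assoc]
  gcongr
  exact setLIntegral_heatKernel_mul_le ht₀ ht₁ hρ.le lpNorm_nonneg hw'

theorem setLIntegral_heatKernel_mul_le_essSup {t ρ : ℝ} (ht : 0 ≤ t) (hρ : ρ ≠ 0)
    {w u : EuclideanSpace ℝ (Fin N) → ℝ} (hu : Measurable u)
    (hwu : ∀ᵐ y ∂volume, ‖y‖ < ρ → w y ≤ u y) :
    ∫⁻ y in {y | ρ < ‖y‖}ᶜ, ENNReal.ofReal (heatKernel N t 0 y * w y) ≤
      essSup (fun x => ∫⁻ y, ENNReal.ofReal (heatKernel N t x y * u y)) volume := by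
  have hwu' : ∀ᵐ y ∂volume.restrict {y | ρ < ‖y‖}ᶜ, w y ≤ u y := by
    rw [ae_restrict_iff' (measurableSet_lt measurable_const measurable_norm).compl]
    filter_upwards [hwu, measure_eq_zero_iff_ae_notMem.1
      (Measure.addHaar_sphere_of_ne_zero volume 0 hρ)] with y hlt hsphere hle
    exact hlt ((not_lt.1 hle : ‖y‖ ≤ ρ).lt_of_ne (by simpa using hsphere))
  calc ∫⁻ y in {y | ρ < ‖y‖}ᶜ, ENNReal.ofReal (heatKernel N t 0 y * w y)
      ≤ ∫⁻ y in {y | ρ < ‖y‖}ᶜ, ENNReal.ofReal (heatKernel N t 0 y * u y) :=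
        lintegral_mono_ae <| hwu'.mono fun y hy =>
          ENNReal.ofReal_le_ofReal (mul_le_mul_of_nonneg_left hy (heatKernel_nonneg ht 0 y))
    _ ≤ ∫⁻ y, ENNReal.ofReal (heatKernel N t 0 y * u y) := setLIntegral_le_lintegral _ _
    _ ≤ _ := lintegral_heatKernel_mul_le_essSup t hu 0

end HeatKernel

theorem stmt2_general (N : ℕ) (α ρ : ℝ) (hα : 0 < α) (hρ : 0 < ρ)
    (w₀ : EuclideanSpace ℝ (Fin N) → ℝ)
    (hsplit : ∃ ψ₁ ψ₂ : EuclideanSpace ℝ (Fin N) → ℝ,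
      Integrable ψ₁ ∧ MemLp ψ₂ ⊤ ∧ ∀ x, ρ < ‖x‖ → w₀ x = ψ₁ x + ψ₂ x)
    (hlim : 1 < Filter.limsup (fun t : ℝ => ENNReal.ofReal ((α * t) ^ (1 / α)) *
      ∫⁻ y, ENNReal.ofReal (heatKernel N t 0 y * w₀ y)) (nhdsWithin 0 (Ioi 0)))
    (u₀ : EuclideanSpace ℝ (Fin N) → ℝ) (hu₀m : Measurable u₀)
    (hcomp : ∀ᵐ x ∂volume, ‖x‖ < ρ → w₀ x ≤ u₀ x) :
    1 < Filter.limsup (fun t : ℝ => ENNReal.ofReal ((α * t) ^ (1 / α)) *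
      essSup (fun x => ∫⁻ y, ENNReal.ofReal (heatKernel N t x y * u₀ y)) volume)
      (nhdsWithin 0 (Ioi 0)) := by
  obtain ⟨ψ₁, ψ₂, hψ₁, hψ₂, hw₀split⟩ := hsplit
  set K : ℝ → ℝ≥0∞ := fun t => ENNReal.ofReal ((α * t) ^ (1 / α))
  set s := {y : EuclideanSpace ℝ (Fin N) | ρ < ‖y‖}
  have hs : MeasurableSet s := measurableSet_lt measurable_const measurable_norm
  calc 1 < _ := hlim
    _ = limsup ((fun t => K t * ∫⁻ y in s, ENNReal.ofReal (heatKernel N t 0 y * w₀ y)) +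
          fun t => K t * ∫⁻ y in sᶜ, ENNReal.ofReal (heatKernel N t 0 y * w₀ y)) (𝓝[>] 0) := by
      refine congrArg (limsup · _) (funext fun t => ?_)
      rw [Pi.add_apply, ← mul_add, lintegral_add_compl _ hs]
    _ = limsup (fun t => K t * ∫⁻ y in sᶜ, ENNReal.ofReal (heatKernel N t 0 y * w₀ y))
          (𝓝[>] 0) := ENNReal.limsup_add_of_left_tendsto_zero
      (tendsto_rpow_mul_setLIntegral_heatKernel_mul hα hρ hψ₁ hψ₂ hw₀split) _
    _ ≤ _ := limsup_le_limsup <| eventually_mem_nhdsWithin.mono fun t (ht : 0 < t) =>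
      mul_le_mul_right (setLIntegral_heatKernel_mul_le_essSup ht.le hρ.ne' hu₀m hcomp) _

/-- If `w₀ ≥ 0` is measurable, equal to an `L¹ + L^∞` function on
`{|x| > ρ}`, and satisfies `limsup_{t↓0} (αt)^{1/α} (e^{tΔ}w₀)(0) > 1`, then every
measurable `u₀ ≥ 0` with `u₀ ≥ w₀` a.e. on `{|x| < ρ}` satisfies
`limsup_{t↓0} (αt)^{1/α} ess sup_x (e^{tΔ}u₀)(x) > 1`. -/
theorem stmt2 (N : ℕ) (hN : 1 ≤ N) (α ρ : ℝ) (hα : 0 < α) (hρ : 0 < ρ)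
    (w₀ : EuclideanSpace ℝ (Fin N) → ℝ) (hw₀m : Measurable w₀) (hw₀ : ∀ x, 0 ≤ w₀ x)
    (hsplit : ∃ ψ₁ ψ₂ : EuclideanSpace ℝ (Fin N) → ℝ,
      Integrable ψ₁ ∧ MemLp ψ₂ ⊤ ∧ ∀ x, ρ < ‖x‖ → w₀ x = ψ₁ x + ψ₂ x)
    (hlim : 1 < Filter.limsup (fun t : ℝ => ENNReal.ofReal ((α * t) ^ (1 / α)) *
      ∫⁻ y, ENNReal.ofReal (heatKernel N t 0 y * w₀ y)) (nhdsWithin 0 (Ioi 0)))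
    (u₀ : EuclideanSpace ℝ (Fin N) → ℝ) (hu₀m : Measurable u₀) (hu₀ : ∀ x, 0 ≤ u₀ x)
    (hcomp : ∀ᵐ x ∂volume, ‖x‖ < ρ → w₀ x ≤ u₀ x) :
    1 < Filter.limsup (fun t : ℝ => ENNReal.ofReal ((α * t) ^ (1 / α)) *
      essSup (fun x => ∫⁻ y, ENNReal.ofReal (heatKernel N t x y * u₀ y)) volume)
      (nhdsWithin 0 (Ioi 0)) :=
  stmt2_general N α ρ hα hρ w₀ hsplit hlim u₀ hu₀m hcomp
end

section
/- Let N ≥ 1 be an integer. With the cutoff functions χ_j as defined in the context, the following two estimates hold pointwise for every integer j ≥ 0, every t > 0 and every x ∈ ℝ^N: (i) (e^{tΔ}χ_j)(x) ≤ χ_{j+1}(x) + 2^{N/2} exp(-a_{j+1}²/(8t)); (ii) (e^{tΔ}(|·|^{-2}χ_j))(x) ≤ a_j^{-2} χ_{j+1}(x) + a_j^{-2} 2^{N/2} exp(-a_{j+1}²/(8t)). -/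
open MeasureTheory Real Set Filter ENNReal

/-- `a_j = 2^{-j} δ`. -/
noncomputable def aCoef (δ : ℝ) (j : ℕ) : ℝ := 2 ^ (-(j : ℝ)) * δ

/-- The cutoff function `χ_j(x) = θ(|x|/a_j)`. -/
noncomputable def cut (θ : ℝ → ℝ) (δ : ℝ) (j : ℕ) {N : ℕ}
    (x : EuclideanSpace ℝ (Fin N)) : ℝ :=
  θ (‖x‖ / aCoef δ j)

lemma gaussInt (N : ℕ) {b : ℝ} (hb : 0 < b) :
    Integrable (fun v : EuclideanSpace ℝ (Fin N) => Real.exp (-b * ‖v‖ ^ 2)) := by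
  have h := (GaussianFourier.integrable_cexp_neg_mul_sq_norm_add
      (V := EuclideanSpace ℝ (Fin N)) (b := (b:ℂ)) (by simpa using hb) 0 0).norm
  convert h using 2 with v
  simp [Complex.norm_exp]
  left; norm_cast

lemma gaussLint (N : ℕ) {b : ℝ} (hb : 0 < b) (x : EuclideanSpace ℝ (Fin N)) :
    ∫⁻ y, ENNReal.ofReal (Real.exp (-b * ‖x - y‖ ^ 2)) =
      ENNReal.ofReal ((π / b) ^ ((N : ℝ) / 2)) := by
  have h1 : (∫⁻ y, ENNReal.ofReal (Real.exp (-b * ‖x - y‖ ^ 2))) =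
      ∫⁻ y, (fun z : EuclideanSpace ℝ (Fin N) =>
        ENNReal.ofReal (Real.exp (-b * ‖z‖ ^ 2))) (y - x) := by
    refine lintegral_congr fun y => ?_
    simp only
    rw [norm_sub_rev]
  rw [h1, lintegral_sub_right_eq_self
    (fun z : EuclideanSpace ℝ (Fin N) => ENNReal.ofReal (Real.exp (-b * ‖z‖ ^ 2))) x]
  rw [← ofReal_integral_eq_lintegral_ofReal (gaussInt N hb)
    (ae_of_all _ fun z => (Real.exp_pos _).le)]
  rw [GaussianFourier.integral_rexp_neg_mul_sq_norm hb]
  simp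

/-- With `χ_j(x) = θ(|x|/a_j)`, `a_j = 2^{-j}δ`, for all `j ≥ 0`, `t > 0`,
`x ∈ ℝ^N`:
(i) `(e^{tΔ}χ_j)(x) ≤ χ_{j+1}(x) + 2^{N/2} exp(-a_{j+1}²/(8t))`;
(ii) `(e^{tΔ}(|·|^{-2}χ_j))(x) ≤ a_j^{-2} χ_{j+1}(x) + a_j^{-2} 2^{N/2} exp(-a_{j+1}²/(8t))`. -/
theorem stmt4 (N : ℕ) (hN : 1 ≤ N) (δ : ℝ) (hδ : 0 < δ)
    (θ : ℝ → ℝ) (hθsmooth : ContDiff ℝ (⊤ : ℕ∞) θ) (hθmono : Monotone θ)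
    (hθ0 : ∀ s ≤ (1 : ℝ), θ s = 0) (hθ1 : ∀ s : ℝ, 2 ≤ s → θ s = 1)
    (j : ℕ) (t : ℝ) (ht : 0 < t) (x : EuclideanSpace ℝ (Fin N)) :
    (∫⁻ y, ENNReal.ofReal (heatKernel N t x y * cut θ δ j y)) ≤
      ENNReal.ofReal (cut θ δ (j + 1) x +
        2 ^ ((N : ℝ) / 2) * Real.exp (-(aCoef δ (j + 1)) ^ 2 / (8 * t))) ∧
    (∫⁻ y, ENNReal.ofReal (heatKernel N t x y * (‖y‖ ^ (-(2 : ℝ)) * cut θ δ j y))) ≤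
      ENNReal.ofReal ((aCoef δ j) ^ (-(2 : ℝ)) * cut θ δ (j + 1) x +
        (aCoef δ j) ^ (-(2 : ℝ)) * 2 ^ ((N : ℝ) / 2) *
          Real.exp (-(aCoef δ (j + 1)) ^ 2 / (8 * t))) := by
  have hπt : (0:ℝ) < 4 * π * t := by positivity
  have hA : ∀ k : ℕ, 0 < aCoef δ k := fun k =>
    mul_pos (Real.rpow_pos_of_pos two_pos _) hδ
  have hhalf : aCoef δ (j + 1) = aCoef δ j / 2 := by
    unfold aCoef
    rw [Nat.cast_add, Nat.cast_one, neg_add, Real.rpow_add two_pos, Real.rpow_neg_one]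
    ring
  have hθnn : ∀ s, 0 ≤ θ s := fun s => by
    rcases le_or_gt s 1 with h | h
    · rw [hθ0 s h]
    · rw [← hθ0 1 le_rfl]; exact hθmono h.le
  have hθle : ∀ s, θ s ≤ 1 := fun s => by
    rcases le_or_gt 2 s with h | h
    · rw [hθ1 s h]
    · rw [← hθ1 2 le_rfl]; exact hθmono h.le
  have hcutnn : ∀ (k : ℕ) (z : EuclideanSpace ℝ (Fin N)), 0 ≤ cut θ δ k z :=
    fun k z => hθnn _
  have hcutle : ∀ (k : ℕ) (z : EuclideanSpace ℝ (Fin N)), cut θ δ k z ≤ 1 :=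
    fun k z => hθle _
  have hK : ∀ y, 0 ≤ heatKernel N t x y := fun y =>
    mul_nonneg (Real.rpow_nonneg hπt.le _) (Real.exp_pos _).le
  set E : ℝ := Real.exp (-(aCoef δ (j + 1)) ^ 2 / (8 * t)) with hE_def
  have hEnn : 0 ≤ E := (Real.exp_pos _).le
  set P : ℝ := (4 * π * t) ^ (-(N : ℝ) / 2) with hP_def
  have hPnn : 0 ≤ P := Real.rpow_nonneg hπt.le _
  -- key pointwise inequality
  have key : ∀ y, heatKernel N t x y * cut θ δ j y ≤
      cut θ δ (j + 1) x * heatKernel N t x y +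
        E * (P * Real.exp (-(1 / (8 * t)) * ‖x - y‖ ^ 2)) := by
    intro y
    rcases le_or_gt (aCoef δ (j + 1)) ‖x - y‖ with hr | hr
    · -- far from x : use Gaussian decay
      have e1 : Real.exp (-‖x - y‖ ^ 2 / (4 * t)) =
          Real.exp (-(‖x - y‖ ^ 2) / (8 * t)) * Real.exp (-(‖x - y‖ ^ 2) / (8 * t)) := by
        rw [← Real.exp_add]; congr 1; ring
      have e2 : Real.exp (-(‖x - y‖ ^ 2) / (8 * t)) ≤ E := by
        rw [hE_def]
        apply Real.exp_le_exp.2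
        have hsq : (aCoef δ (j + 1)) ^ 2 ≤ ‖x - y‖ ^ 2 :=
          pow_le_pow_left₀ (hA (j + 1)).le hr 2
        rw [div_le_div_iff₀ (by positivity) (by positivity)]
        nlinarith
      have e3 : Real.exp (-(‖x - y‖ ^ 2) / (8 * t)) =
          Real.exp (-(1 / (8 * t)) * ‖x - y‖ ^ 2) := by congr 1; ring
      calc heatKernel N t x y * cut θ δ j y ≤ heatKernel N t x y :=
            mul_le_of_le_one_right (hK y) (hcutle j y)
        _ = P * (Real.exp (-(‖x - y‖ ^ 2) / (8 * t)) *
              Real.exp (-(‖x - y‖ ^ 2) / (8 * t))) := by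
            unfold heatKernel; rw [e1]
        _ ≤ P * (E * Real.exp (-(‖x - y‖ ^ 2) / (8 * t))) := by
            apply mul_le_mul_of_nonneg_left _ hPnn
            exact mul_le_mul_of_nonneg_right e2 (Real.exp_pos _).le
        _ = E * (P * Real.exp (-(1 / (8 * t)) * ‖x - y‖ ^ 2)) := by rw [← e3]; ring
        _ ≤ _ := le_add_of_nonneg_left (mul_nonneg (hcutnn _ _) (hK y))
    · -- close to x : cut_j y ≤ cut_{j+1} x
      have hcut : cut θ δ j y ≤ cut θ δ (j + 1) x := by
        unfold cut
        rcases le_or_gt ‖y‖ (aCoef δ j) with hy | hy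
        · rw [hθ0 _ ((div_le_one (hA j)).2 hy)]
          exact hθnn _
        · apply hθmono
          rw [hhalf]
          have h4 : ‖y‖ - ‖x‖ ≤ ‖x - y‖ := by
            have := norm_sub_norm_le y x
            rw [norm_sub_rev]; linarith [this]
          have hr' : ‖x - y‖ < aCoef δ j / 2 := hhalf ▸ hr
          have hx : ‖y‖ / 2 ≤ ‖x‖ := by linarith
          rw [div_le_div_iff₀ (hA j) (half_pos (hA j))]
          nlinarith [hA j]
      calc heatKernel N t x y * cut θ δ j y ≤ heatKernel N t x y * cut θ δ (j + 1) x :=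
            mul_le_mul_of_nonneg_left hcut (hK y)
        _ = cut θ δ (j + 1) x * heatKernel N t x y := by ring
        _ ≤ _ := le_add_of_nonneg_right (by positivity)
  -- Gaussian lintegrals
  have hb4 : (0:ℝ) < 1 / (4 * t) := by positivity
  have hb8 : (0:ℝ) < 1 / (8 * t) := by positivity
  have g4 : (∫⁻ y, ENNReal.ofReal (Real.exp (-(1 / (4 * t)) * ‖x - y‖ ^ 2))) =
      ENNReal.ofReal ((4 * π * t) ^ ((N : ℝ) / 2)) := by
    rw [gaussLint N hb4 x]
    congr 2
    field_simp
  have g8 : (∫⁻ y, ENNReal.ofReal (Real.exp (-(1 / (8 * t)) * ‖x - y‖ ^ 2))) =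
      ENNReal.ofReal ((8 * π * t) ^ ((N : ℝ) / 2)) := by
    rw [gaussLint N hb8 x]
    congr 2
    field_simp
  -- total mass of the kernel
  have hKint : (∫⁻ y, ENNReal.ofReal (heatKernel N t x y)) = 1 := by
    have : (∫⁻ y, ENNReal.ofReal (heatKernel N t x y)) =
        ∫⁻ y, ENNReal.ofReal P * ENNReal.ofReal (Real.exp (-(1 / (4 * t)) * ‖x - y‖ ^ 2)) := by
      refine lintegral_congr fun y => ?_
      unfold heatKernel
      rw [← hP_def, ENNReal.ofReal_mul hPnn]
      congr 2
      ring
    rw [this, lintegral_const_mul' _ _ ENNReal.ofReal_ne_top, g4,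
      ← ENNReal.ofReal_mul hPnn, hP_def, ← Real.rpow_add hπt]
    have hz : (-(N:ℝ)/2 + (N:ℝ)/2) = 0 := by ring
    rw [hz, Real.rpow_zero, ENNReal.ofReal_one]
  have hKint8 : (∫⁻ y, ENNReal.ofReal (P * Real.exp (-(1 / (8 * t)) * ‖x - y‖ ^ 2))) =
      ENNReal.ofReal (2 ^ ((N : ℝ) / 2)) := by
    have : (∫⁻ y, ENNReal.ofReal (P * Real.exp (-(1 / (8 * t)) * ‖x - y‖ ^ 2))) =
        ∫⁻ y, ENNReal.ofReal P * ENNReal.ofReal (Real.exp (-(1 / (8 * t)) * ‖x - y‖ ^ 2)) := by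
      refine lintegral_congr fun y => ENNReal.ofReal_mul hPnn
    rw [this, lintegral_const_mul' _ _ ENNReal.ofReal_ne_top, g8,
      ← ENNReal.ofReal_mul hPnn, hP_def]
    congr 1
    have h8 : (8 * π * t : ℝ) = 2 * (4 * π * t) := by ring
    rw [h8, Real.mul_rpow (by norm_num) hπt.le, ← mul_assoc,
      mul_comm ((4 * π * t) ^ (-(N:ℝ)/2)), mul_assoc, ← Real.rpow_add hπt]
    have hz : (-(N:ℝ)/2 + (N:ℝ)/2) = 0 := by ring
    rw [hz, Real.rpow_zero, mul_one]
  -- measurability of the first summand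
  have hKcont : Continuous (fun y : EuclideanSpace ℝ (Fin N) => heatKernel N t x y) := by
    unfold heatKernel
    fun_prop
  have hmeas : Measurable (fun y : EuclideanSpace ℝ (Fin N) =>
      ENNReal.ofReal (cut θ δ (j + 1) x * heatKernel N t x y)) :=
    ((continuous_const.mul hKcont).measurable).ennreal_ofReal
  -- part (i)
  have main : (∫⁻ y, ENNReal.ofReal (heatKernel N t x y * cut θ δ j y)) ≤
      ENNReal.ofReal (cut θ δ (j + 1) x + 2 ^ ((N : ℝ) / 2) * E) := by
    calc (∫⁻ y, ENNReal.ofReal (heatKernel N t x y * cut θ δ j y))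
        ≤ ∫⁻ y, (ENNReal.ofReal (cut θ δ (j + 1) x * heatKernel N t x y) +
            ENNReal.ofReal (E * (P * Real.exp (-(1 / (8 * t)) * ‖x - y‖ ^ 2)))) := by
          refine lintegral_mono fun y => ?_
          rw [← ENNReal.ofReal_add (mul_nonneg (hcutnn _ _) (hK y))
            (by positivity)]
          exact ENNReal.ofReal_le_ofReal (key y)
      _ = (∫⁻ y, ENNReal.ofReal (cut θ δ (j + 1) x * heatKernel N t x y)) +
            ∫⁻ y, ENNReal.ofReal (E * (P * Real.exp (-(1 / (8 * t)) * ‖x - y‖ ^ 2))) :=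
          lintegral_add_left hmeas _
      _ = ENNReal.ofReal (cut θ δ (j + 1) x) * (∫⁻ y, ENNReal.ofReal (heatKernel N t x y)) +
            ENNReal.ofReal E *
              ∫⁻ y, ENNReal.ofReal (P * Real.exp (-(1 / (8 * t)) * ‖x - y‖ ^ 2)) := by
          rw [← lintegral_const_mul' _ _ ENNReal.ofReal_ne_top,
            ← lintegral_const_mul' _ _ ENNReal.ofReal_ne_top]
          congr 1
          · exact lintegral_congr fun y => ENNReal.ofReal_mul (hcutnn _ _)
          · exact lintegral_congr fun y => ENNReal.ofReal_mul hEnn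
      _ = ENNReal.ofReal (cut θ δ (j + 1) x) + ENNReal.ofReal E *
            ENNReal.ofReal (2 ^ ((N : ℝ) / 2)) := by rw [hKint, hKint8, mul_one]
      _ = ENNReal.ofReal (cut θ δ (j + 1) x + 2 ^ ((N : ℝ) / 2) * E) := by
          rw [← ENNReal.ofReal_mul hEnn,
            ENNReal.ofReal_add (hcutnn _ _) (by positivity)]
          congr 1
          · exact congrArg ENNReal.ofReal (mul_comm E _)
  refine ⟨main, ?_⟩
  -- part (ii)
  have hRnn : 0 ≤ (aCoef δ j) ^ (-(2:ℝ)) := Real.rpow_nonneg (hA j).le _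
  have key2 : ∀ y, heatKernel N t x y * (‖y‖ ^ (-(2:ℝ)) * cut θ δ j y) ≤
      (aCoef δ j) ^ (-(2:ℝ)) * (heatKernel N t x y * cut θ δ j y) := by
    intro y
    rcases le_or_gt ‖y‖ (aCoef δ j) with hy | hy
    · have hc : cut θ δ j y = 0 := hθ0 _ ((div_le_one (hA j)).2 hy)
      rw [hc]; simp
    · have hrr : ‖y‖ ^ (-(2:ℝ)) ≤ (aCoef δ j) ^ (-(2:ℝ)) :=
        Real.rpow_le_rpow_of_nonpos (hA j) hy.le (by norm_num)
      calc heatKernel N t x y * (‖y‖ ^ (-(2:ℝ)) * cut θ δ j y)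
          ≤ heatKernel N t x y * ((aCoef δ j) ^ (-(2:ℝ)) * cut θ δ j y) :=
            mul_le_mul_of_nonneg_left
              (mul_le_mul_of_nonneg_right hrr (hcutnn _ _)) (hK y)
        _ = (aCoef δ j) ^ (-(2:ℝ)) * (heatKernel N t x y * cut θ δ j y) := by ring
  calc (∫⁻ y, ENNReal.ofReal (heatKernel N t x y * (‖y‖ ^ (-(2:ℝ)) * cut θ δ j y)))
      ≤ ∫⁻ y, ENNReal.ofReal ((aCoef δ j) ^ (-(2:ℝ)) *
          (heatKernel N t x y * cut θ δ j y)) :=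
        lintegral_mono fun y => ENNReal.ofReal_le_ofReal (key2 y)
    _ = ENNReal.ofReal ((aCoef δ j) ^ (-(2:ℝ))) *
          ∫⁻ y, ENNReal.ofReal (heatKernel N t x y * cut θ δ j y) := by
        rw [← lintegral_const_mul' _ _ ENNReal.ofReal_ne_top]
        exact lintegral_congr fun y => ENNReal.ofReal_mul hRnn
    _ ≤ ENNReal.ofReal ((aCoef δ j) ^ (-(2:ℝ))) *
          ENNReal.ofReal (cut θ δ (j + 1) x + 2 ^ ((N : ℝ) / 2) * E) :=
        mul_le_mul_right main _
    _ = ENNReal.ofReal ((aCoef δ j) ^ (-(2:ℝ)) *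
          (cut θ δ (j + 1) x + 2 ^ ((N : ℝ) / 2) * E)) := (ENNReal.ofReal_mul hRnn).symm
    _ = _ := by
        congr 1
        ring
end

section
/- Let X be a real Banach space and let T : [0,∞) → L(X) (bounded linear operators on X) satisfy: T(0) = I; T(t+s) = T(t)T(s) for all s, t ≥ 0; ‖T(t)‖ ≤ 1 for all t ≥ 0; and for every f ∈ X the map t ↦ T(t)f is continuous [0,∞) → X. Let λ > 0 and γ ∈ (0,1), and for f ∈ X define S_γ f = Γ(γ)^{-1} ∫₀^∞ s^{γ-1} e^{-λs} T(s) f ds (a convergent Bochner integral, since the integrand is continuous with norm ≤ s^{γ-1} e^{-λs} ‖f‖). Then for every t ≥ 0 and every f ∈ X, ‖(T(t) − I) S_γ f‖ ≤ (2/Γ(γ+1)) t^γ ‖f‖. -/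
/-!
Let `φ` be the kernel `s ↦ s^(γ-1) e^{-λs}` extended by zero to `(-∞, 0]`. The semigroup
law turns `T(t) ∫ φ(s) T(s) f ds` into `∫ φ(u - t) T(u) f du`, so by contractivity
`‖(T(t) - I) S_γ f‖ ≤ Γ(γ)⁻¹ ‖f‖ ∫ |φ(u - t) - φ(u)| du`. As `φ` vanishes on `(-∞, 0]` and
decreases on `(0, ∞)`, this `L¹` modulus of translation equals `2 ∫₀ᵗ φ ≤ 2 t^γ / γ`, and
`γ Γ(γ) = Γ(γ + 1)`.
-/

open MeasureTheory Real Set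

section ContractionSemigroup

variable {X : Type*} [NormedAddCommGroup X] [NormedSpace ℝ X] {T : ℝ → X →L[ℝ] X}

lemma norm_smul_orbit_le (hTcontr : ∀ t : ℝ, 0 ≤ t → ‖T t‖ ≤ 1) {φ : ℝ → ℝ}
    (hφ_supp : ∀ u < 0, φ u = 0) (u : ℝ) (f : X) :
    ‖φ u • T u f‖ ≤ |φ u| * ‖f‖ := by
  rcases lt_or_ge u 0 with hu | hu
  · simp [hφ_supp u hu]
  · rw [norm_smul, Real.norm_eq_abs]
    gcongr
    simpa using (T u).le_of_opNorm_le (hTcontr u hu) f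

lemma integrable_smul_orbit (hTcontr : ∀ t : ℝ, 0 ≤ t → ‖T t‖ ≤ 1)
    (hTcont : ∀ f : X, ContinuousOn (fun t => T t f) (Ici 0)) {φ : ℝ → ℝ}
    (hφ : Integrable φ) (hφ_supp : ∀ u < 0, φ u = 0) (f : X) :
    Integrable fun u => φ u • T u f := by
  have h_ind : (fun u => φ u • T u f) = (Ici 0).indicator fun u => φ u • T u f := by
    funext u
    by_cases hu : u ∈ Ici (0 : ℝ)
    · simp [hu]
    · simp [hu, hφ_supp u (not_le.1 hu)]
  rw [h_ind, integrable_indicator_iff measurableSet_Ici]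
  refine hφ.integrableOn.smul_bdd ‖f‖ ((hTcont f).aestronglyMeasurable measurableSet_Ici) ?_
  filter_upwards [ae_restrict_mem measurableSet_Ici] with u hu
  simpa using (T u).le_of_opNorm_le (hTcontr u hu) f

variable [CompleteSpace X]

lemma apply_integral_smul_orbit
    (hTsemi : ∀ s t : ℝ, 0 ≤ s → 0 ≤ t → T (t + s) = (T t).comp (T s))
    (hTcontr : ∀ t : ℝ, 0 ≤ t → ‖T t‖ ≤ 1)
    (hTcont : ∀ f : X, ContinuousOn (fun t => T t f) (Ici 0)) {φ : ℝ → ℝ}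
    (hφ : Integrable φ) (hφ_supp : ∀ u < 0, φ u = 0) {t : ℝ} (ht : 0 ≤ t) (f : X) :
    T t (∫ u, φ u • T u f) = ∫ u, φ (u - t) • T u f := by
  calc T t (∫ u, φ u • T u f) = ∫ s, φ s • T (s + t) f := by
        rw [← (T t).integral_comp_comm (integrable_smul_orbit hTcontr hTcont hφ hφ_supp f)]
        refine integral_congr_ae (ae_of_all _ fun s => ?_)
        rcases lt_or_ge s 0 with hs | hs
        · simp [hφ_supp s hs]
        · simp [add_comm s t, hTsemi s t hs ht]
    _ = ∫ u, φ (u - t) • T u f := by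
        simpa using integral_add_right_eq_self (fun u => φ (u - t) • T u f) t

lemma norm_apply_integral_smul_orbit_sub_le
    (hTsemi : ∀ s t : ℝ, 0 ≤ s → 0 ≤ t → T (t + s) = (T t).comp (T s))
    (hTcontr : ∀ t : ℝ, 0 ≤ t → ‖T t‖ ≤ 1)
    (hTcont : ∀ f : X, ContinuousOn (fun t => T t f) (Ici 0)) {φ : ℝ → ℝ}
    (hφ : Integrable φ) (hφ_supp : ∀ u < 0, φ u = 0) {t : ℝ} (ht : 0 ≤ t) (f : X) :
    ‖T t (∫ u, φ u • T u f) - ∫ u, φ u • T u f‖ ≤ (∫ u, |φ (u - t) - φ u|) * ‖f‖ := by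
  have hψ : Integrable fun u => φ (u - t) - φ u := (hφ.comp_sub_right t).sub hφ
  have hψ_supp : ∀ u < 0, φ (u - t) - φ u = 0 := fun u hu => by
    rw [hφ_supp u hu, hφ_supp (u - t) (by linarith), sub_zero]
  rw [apply_integral_smul_orbit hTsemi hTcontr hTcont hφ hφ_supp ht,
    ← integral_sub
      (integrable_smul_orbit hTcontr hTcont (hφ.comp_sub_right t)
        (fun u hu => hφ_supp _ (by linarith)) f)
      (integrable_smul_orbit hTcontr hTcont hφ hφ_supp f),
    ← integral_mul_const]
  simp_rw [← sub_smul]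
  exact norm_integral_le_of_norm_le (hψ.abs.mul_const _)
    (ae_of_all _ (norm_smul_orbit_le hTcontr hψ_supp · f))

end ContractionSemigroup

lemma integral_abs_sub_comp_sub_right {φ : ℝ → ℝ} (hφ : Integrable φ)
    (hφ_supp : ∀ u ≤ 0, φ u = 0) (hφ_nonneg : ∀ u, 0 ≤ φ u) (hφ_anti : AntitoneOn φ (Ioi 0))
    {t : ℝ} (ht : 0 ≤ t) :
    ∫ u, |φ (u - t) - φ u| = 2 * ∫ u in Ioc 0 t, φ u := by
  -- The shifted kernel vanishes on `(0, t]` and dominates the kernel beyond `t`.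
  have h_pointwise :
      ∀ u, |φ (u - t) - φ u| = (φ (u - t) - φ u) + 2 * (Ioc 0 t).indicator φ u := by
    intro u
    rcases le_or_gt u 0 with hu | hu
    · simp [hφ_supp u hu, hφ_supp (u - t) (by linarith), hu.not_gt]
    rcases le_or_gt u t with hut | hut
    · rw [hφ_supp (u - t) (by linarith), indicator_of_mem (show u ∈ Ioc 0 t from ⟨hu, hut⟩),
        zero_sub, abs_neg, abs_of_nonneg (hφ_nonneg u)]
      ring
    · have : φ u ≤ φ (u - t) := hφ_anti (sub_pos.2 hut) hu (by linarith)
      simp [abs_of_nonneg (sub_nonneg.2 this), hut.not_ge]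
  have hφ_shift : Integrable fun u => φ (u - t) := hφ.comp_sub_right t
  have hψ : Integrable fun u => φ (u - t) - φ u := hφ_shift.sub hφ
  simp_rw [h_pointwise]
  rw [integral_add hψ ((hφ.indicator measurableSet_Ioc).const_mul 2),
    integral_sub hφ_shift hφ, integral_sub_right_eq_self, integral_const_mul,
    integral_indicator measurableSet_Ioc, sub_self, zero_add]

/-- The kernel of `S_γ = Γ(γ)⁻¹ ∫₀^∞ s^(γ-1) e^{-λs} T(s) ds`, extended by zero so that the
integral can be taken over `ℝ` and translated. -/
noncomputable def powerResolventKernel (γ lam : ℝ) : ℝ → ℝ :=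
  (Ioi 0).indicator fun s => s ^ (γ - 1) * exp (-(lam * s))

namespace powerResolventKernel

variable {γ lam : ℝ}

lemma eq_zero_of_nonpos {u : ℝ} (hu : u ≤ 0) : powerResolventKernel γ lam u = 0 :=
  indicator_of_notMem (not_lt.2 hu) _

lemma eq_of_pos {u : ℝ} (hu : 0 < u) :
    powerResolventKernel γ lam u = u ^ (γ - 1) * exp (-(lam * u)) :=
  indicator_of_mem hu _

lemma nonneg (u : ℝ) : 0 ≤ powerResolventKernel γ lam u :=
  indicator_nonneg (fun _ hs => mul_nonneg (rpow_nonneg (le_of_lt hs) _) (exp_nonneg _)) u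

lemma integrable (hγ : 0 < γ) (hlam : 0 < lam) : Integrable (powerResolventKernel γ lam) := by
  refine (integrable_indicator_iff measurableSet_Ioi).2 ?_
  simpa [rpow_one, neg_mul] using
    integrableOn_rpow_mul_exp_neg_mul_rpow (by linarith : -1 < γ - 1) zero_lt_one hlam

lemma antitoneOn (hγ : γ ≤ 1) (hlam : 0 ≤ lam) :
    AntitoneOn (powerResolventKernel γ lam) (Ioi 0) := by
  intro a ha b hb hab
  rw [eq_of_pos ha, eq_of_pos hb]
  exact mul_le_mul (rpow_le_rpow_of_nonpos ha hab (by linarith))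
    (exp_le_exp.2 (by nlinarith)) (exp_nonneg _) (rpow_nonneg (le_of_lt ha) _)

lemma setIntegral_Ioc_le (hγ : 0 < γ) (hlam : 0 < lam) {t : ℝ} (ht : 0 ≤ t) :
    ∫ u in Ioc 0 t, powerResolventKernel γ lam u ≤ t ^ γ / γ := by
  have h_rpow : IntegrableOn (fun s : ℝ => s ^ (γ - 1)) (Ioc 0 t) :=
    (intervalIntegrable_iff_integrableOn_Ioc_of_le ht).1
      (intervalIntegral.intervalIntegrable_rpow' (by linarith))
  calc ∫ u in Ioc 0 t, powerResolventKernel γ lam u ≤ ∫ u in Ioc 0 t, u ^ (γ - 1) := by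
        refine setIntegral_mono_on ((integrable hγ hlam).integrableOn) h_rpow measurableSet_Ioc
          fun u hu => ?_
        rw [eq_of_pos hu.1]
        exact mul_le_of_le_one_right (rpow_nonneg hu.1.le _)
          (exp_le_one_iff.2 (by nlinarith [hu.1]))
    _ = t ^ γ / γ := by
        rw [← intervalIntegral.integral_of_le ht, integral_rpow (Or.inl (by linarith)),
          sub_add_cancel, zero_rpow hγ.ne']
        ring

end powerResolventKernel

lemma setIntegral_Ioi_smul_eq_integral_powerResolventKernel_smul {X : Type*}
    [NormedAddCommGroup X] [NormedSpace ℝ X] (γ lam : ℝ) (F : ℝ → X) :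
    ∫ s in Ioi (0 : ℝ), (s ^ (γ - 1) * exp (-(lam * s))) • F s =
      ∫ s, powerResolventKernel γ lam s • F s := by
  rw [← integral_indicator measurableSet_Ioi]
  simp_rw [indicator_smul_apply_left]
  rfl

theorem stmt15_general (X : Type*) [NormedAddCommGroup X] [NormedSpace ℝ X] [CompleteSpace X]
    (T : ℝ → X →L[ℝ] X)
    (hTsemi : ∀ s t : ℝ, 0 ≤ s → 0 ≤ t → T (t + s) = (T t).comp (T s))
    (hTcontr : ∀ t : ℝ, 0 ≤ t → ‖T t‖ ≤ 1)
    (hTcont : ∀ f : X, ContinuousOn (fun t => T t f) (Ici 0))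
    (lam γ : ℝ) (hlam : 0 < lam) (hγ : γ ∈ Ioo (0 : ℝ) 1)
    (t : ℝ) (ht : 0 ≤ t) (f : X) :
    ‖T t ((Real.Gamma γ)⁻¹ •
          ∫ s in Ioi (0 : ℝ), (s ^ (γ - 1) * Real.exp (-(lam * s))) • T s f) -
        (Real.Gamma γ)⁻¹ •
          ∫ s in Ioi (0 : ℝ), (s ^ (γ - 1) * Real.exp (-(lam * s))) • T s f‖ ≤
      2 / Real.Gamma (γ + 1) * t ^ γ * ‖f‖ := by
  obtain ⟨hγ0, hγ1⟩ := hγ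
  set φ := powerResolventKernel γ lam
  have hφ : Integrable φ := powerResolventKernel.integrable hγ0 hlam
  have hΓ : 0 < Gamma γ := Gamma_pos_of_pos hγ0
  rw [setIntegral_Ioi_smul_eq_integral_powerResolventKernel_smul, map_smul, ← smul_sub,
    norm_smul, norm_inv, norm_of_nonneg hΓ.le]
  calc (Gamma γ)⁻¹ * ‖T t (∫ u, φ u • T u f) - ∫ u, φ u • T u f‖
      ≤ (Gamma γ)⁻¹ * ((∫ u, |φ (u - t) - φ u|) * ‖f‖) := by
        gcongr
        exact norm_apply_integral_smul_orbit_sub_le hTsemi hTcontr hTcont hφ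
          (fun u hu => powerResolventKernel.eq_zero_of_nonpos hu.le) ht f
    _ = (Gamma γ)⁻¹ * (2 * (∫ u in Ioc 0 t, φ u) * ‖f‖) := by
        rw [integral_abs_sub_comp_sub_right hφ
          (fun _ => powerResolventKernel.eq_zero_of_nonpos) powerResolventKernel.nonneg
          (powerResolventKernel.antitoneOn hγ1.le hlam.le) ht]
    _ ≤ (Gamma γ)⁻¹ * (2 * (t ^ γ / γ) * ‖f‖) := by
        gcongr
        exact powerResolventKernel.setIntegral_Ioc_le hγ0 hlam ht
    _ = 2 / Gamma (γ + 1) * t ^ γ * ‖f‖ := by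
        rw [Gamma_add_one hγ0.ne']
        field_simp

/-- Lemma C.3, estimate (C.5).  Let `(T(t))_{t≥0}` be a strongly
continuous contraction semigroup on a Banach space `X`, `λ > 0`, `γ ∈ (0,1)`, and
`S_γ f = Γ(γ)⁻¹ ∫₀^∞ s^{γ-1} e^{-λs} T(s) f ds`.  Then
`‖(T(t) − I) S_γ f‖ ≤ (2/Γ(γ+1)) t^γ ‖f‖` for all `t ≥ 0` and `f ∈ X`. -/
theorem stmt15 (X : Type*) [NormedAddCommGroup X] [NormedSpace ℝ X] [CompleteSpace X]
    (T : ℝ → X →L[ℝ] X)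
    (hT0 : T 0 = ContinuousLinearMap.id ℝ X)
    (hTsemi : ∀ s t : ℝ, 0 ≤ s → 0 ≤ t → T (t + s) = (T t).comp (T s))
    (hTcontr : ∀ t : ℝ, 0 ≤ t → ‖T t‖ ≤ 1)
    (hTcont : ∀ f : X, ContinuousOn (fun t => T t f) (Ici 0))
    (lam γ : ℝ) (hlam : 0 < lam) (hγ : γ ∈ Ioo (0 : ℝ) 1)
    (t : ℝ) (ht : 0 ≤ t) (f : X) :
    ‖T t ((Real.Gamma γ)⁻¹ •
          ∫ s in Ioi (0 : ℝ), (s ^ (γ - 1) * Real.exp (-(lam * s))) • T s f) -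
        (Real.Gamma γ)⁻¹ •
          ∫ s in Ioi (0 : ℝ), (s ^ (γ - 1) * Real.exp (-(lam * s))) • T s f‖ ≤
      2 / Real.Gamma (γ + 1) * t ^ γ * ‖f‖ :=
  stmt15_general X T hTsemi hTcontr hTcont lam γ hlam hγ t ht f
end
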